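/- For fixed integers n, r, p, i ≥ 1 with p ≤ r: the sum over partitions μ of n with exactly p parts of (⟨μ, r⟩ / z_μ) m_i(μ) equals ∑_{j=1}^{i} (|s(r-j, p-1)| / (i (r-j)!)) C(i, j) C(n-i-1, r-j-1). -/

import Mathlib

open Finset

/-- Ferrers diagram of a list of row lengths: cells `(i,j)` with `i` a row index
and `j < l[i]`. -/
def diagram (l : List ℕ) : Finset (ℕ × ℕ) :=
  (Finset.range l.length).biUnion fun i => (Finset.range (l.getD i 0)).image fun j => (i, j)

/-- `gbc l r` = `⟨λ, r⟩`: the number of `r`-element subsets of the Ferrers diagram of `l`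
containing at least one cell in every row. -/
def gbc (l : List ℕ) (r : ℕ) : ℕ :=
  (((diagram l).powersetCard r).filter
    (fun S => ∀ i ∈ Finset.range l.length, ∃ c ∈ S, c.1 = i)).card

/-- `⟨λ, r⟩` for integer `r`, zero for negative `r`. -/
def gbcZ (l : List ℕ) (r : ℤ) : ℕ := if 0 ≤ r then gbc l r.toNat else 0

/-- `⟨μ, r⟩` for a partition `μ` of `n`. -/
def gbcP {n : ℕ} (μ : n.Partition) (r : ℕ) : ℕ :=
  gbc (μ.parts.sort (· ≥ ·)) r

/-- `z_μ = ∏_{i ≥ 1} i^{m_i(μ)} m_i(μ)!`. -/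
def zMu {n : ℕ} (μ : n.Partition) : ℕ :=
  ∏ i ∈ μ.parts.toFinset, i ^ μ.parts.count i * (μ.parts.count i).factorial

/-- rising factorial `(a)_s = a(a+1)⋯(a+s-1)`. -/
def asc (a s : ℕ) : ℕ := ∏ t ∈ Finset.range s, (a + t)

/-- polynomial binomial coefficient `C(x, r) = x(x-1)⋯(x-r+1)/r!`. -/
def cb (x : ℚ) (r : ℕ) : ℚ := (∏ t ∈ Finset.range r, (x - t)) / r.factorial

/-- `h_k(1^x) = C(x+k-1, k) = x(x+1)⋯(x+k-1)/k!` as a polynomial in `x`. -/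
def hp (x : ℚ) (k : ℕ) : ℚ := (∏ t ∈ Finset.range k, (x + t)) / k.factorial

/-- integer binomial coefficient with the convention `C(a,b) = 0` unless `0 ≤ b ≤ a`. -/
def bin (a b : ℤ) : ℚ := if 0 ≤ b ∧ b ≤ a then ((a.toNat).choose b.toNat : ℚ) else 0

/-- integer binomial coefficient with the additional convention `C(-1,-1) = 1`. -/
def binC (a b : ℤ) : ℚ := if a = -1 ∧ b = -1 then 1 else bin a b

/-- unsigned Stirling numbers of the first kind:
`x(x+1)⋯(x+n-1) = ∑_k stir n k * x^k`. -/
def stir : ℕ → ℕ → ℕ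
  | 0, 0 => 1
  | 0, _ + 1 => 0
  | _ + 1, 0 => 0
  | n + 1, k + 1 => n * stir n (k + 1) + stir n k

lemma mem_diagram {l : List ℕ} {c : ℕ × ℕ} :
    c ∈ diagram l ↔ c.1 < l.length ∧ c.2 < l.getD c.1 0 := by
  obtain ⟨x, y⟩ := c
  simp only [diagram, Finset.mem_biUnion, Finset.mem_range, Finset.mem_image, Prod.mk.injEq]
  constructor
  · rintro ⟨i, hi, j, hj, rfl, rfl⟩; exact ⟨hi, hj⟩
  · rintro ⟨hx, hy⟩; exact ⟨x, hx, y, hy, rfl, rfl⟩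
lemma gbc_nil (r : ℕ) : gbc [] r = if r = 0 then 1 else 0 := by
  unfold gbc diagram
  split
  · subst ‹r = 0›; simp
  · rw [Finset.card_eq_zero]
    simp only [List.length_nil, Finset.range_zero, Finset.biUnion_empty]
    rw [Finset.powersetCard_eq_empty.2 (by simp; omega)]
    simp
private lemma filt0 (T : Finset ℕ) (U : Finset (ℕ × ℕ)) :
    ((T.image fun y => ((0:ℕ), y)) ∪ U.image fun c => (c.1 + 1, c.2)).filter
      (fun c => c.1 = 0) = T.image fun y => ((0:ℕ), y) := by
  ext c
  simp only [Finset.mem_filter, Finset.mem_union, Finset.mem_image]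
  constructor
  · rintro ⟨⟨y, hy, rfl⟩ | ⟨d, hd, rfl⟩, h0⟩
    · exact ⟨y, hy, rfl⟩
    · simp at h0
  · rintro ⟨y, hy, rfl⟩
    exact ⟨Or.inl ⟨y, hy, rfl⟩, rfl⟩
private lemma filt1 (T : Finset ℕ) (U : Finset (ℕ × ℕ)) :
    ((T.image fun y => ((0:ℕ), y)) ∪ U.image fun c => (c.1 + 1, c.2)).filter
      (fun c => ¬ c.1 = 0) = U.image fun c => (c.1 + 1, c.2) := by
  ext c
  simp only [Finset.mem_filter, Finset.mem_union, Finset.mem_image]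
  constructor
  · rintro ⟨⟨y, hy, rfl⟩ | ⟨d, hd, rfl⟩, h0⟩
    · simp at h0
    · exact ⟨d, hd, rfl⟩
  · rintro ⟨d, hd, rfl⟩
    exact ⟨Or.inr ⟨d, hd, rfl⟩, by simp⟩
private lemma injOn_snd0 (S : Finset (ℕ × ℕ)) :
    Set.InjOn (Prod.snd : ℕ × ℕ → ℕ) ↑(S.filter fun c : ℕ × ℕ => c.1 = 0) := by
  intro c hc d hd h
  simp only [Finset.coe_filter, Set.mem_setOf_eq] at hc hd
  exact Prod.ext (hc.2.trans hd.2.symm) h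
private lemma injOn_down (S : Finset (ℕ × ℕ)) :
    Set.InjOn (fun c : ℕ × ℕ => (c.1 - 1, c.2)) ↑(S.filter fun c => ¬ c.1 = 0) := by
  intro c hc d hd h
  simp only [Finset.coe_filter, Set.mem_setOf_eq] at hc hd
  simp only [Prod.mk.injEq] at h
  exact Prod.ext (by omega) h.2
private lemma inj_zeroPair : Function.Injective (fun y : ℕ => ((0:ℕ), y)) := by
  intro y z h; simpa using h
private lemma inj_up : Function.Injective (fun c : ℕ × ℕ => (c.1 + 1, c.2)) := by
  intro c d h
  simp only [Prod.mk.injEq] at h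
  exact Prod.ext (by omega) h.2
lemma gbc_cons (a : ℕ) (l : List ℕ) (r : ℕ) :
    gbc (a :: l) r = ∑ j ∈ Finset.Icc 1 r, a.choose j * gbc l (r - j) := by
  classical
  set A := ((diagram (a :: l)).powersetCard r).filter
      (fun S => ∀ i ∈ Finset.range (a :: l).length, ∃ c ∈ S, c.1 = i) with hA
  have key : ∀ S ∈ A, (S.filter fun c => c.1 = 0).card ∈ Finset.Icc 1 r := by
    intro S hS
    simp only [hA, Finset.mem_filter, Finset.mem_powersetCard] at hS
    obtain ⟨⟨hsub, hcard⟩, hhits⟩ := hS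
    obtain ⟨c, hc, hc0⟩ := hhits 0 (by simp)
    refine Finset.mem_Icc.2 ⟨?_, ?_⟩
    · exact Finset.card_pos.2 ⟨c, Finset.mem_filter.2 ⟨hc, hc0⟩⟩
    · calc (S.filter fun c => c.1 = 0).card ≤ S.card := Finset.card_filter_le _ _
        _ = r := hcard
  rw [show gbc (a :: l) r = A.card from rfl, Finset.card_eq_sum_card_fiberwise key]
  refine Finset.sum_congr rfl fun j hj => ?_
  rw [Finset.mem_Icc] at hj
  have hcardt : (Finset.powersetCard j (Finset.range a) ×ˢ
      (((diagram l).powersetCard (r - j)).filter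
        (fun S => ∀ i ∈ Finset.range l.length, ∃ c ∈ S, c.1 = i))).card
      = a.choose j * gbc l (r - j) := by
    rw [Finset.card_product, Finset.card_powersetCard, Finset.card_range]; rfl
  rw [← hcardt]
  refine Finset.card_nbij'
    (i := fun S => ((S.filter fun c => c.1 = 0).image Prod.snd,
      (S.filter fun c => ¬ c.1 = 0).image fun c => (c.1 - 1, c.2)))
    (j := fun TU => TU.1.image (fun y => ((0:ℕ), y)) ∪ TU.2.image fun c => (c.1 + 1, c.2))
    ?_ ?_ ?_ ?_
  · -- maps into product
    intro S hS
    simp only [Finset.mem_coe, Finset.mem_filter, hA, Finset.mem_powersetCard] at hS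
    obtain ⟨⟨⟨hsub, hcard⟩, hhits⟩, hfib⟩ := hS
    simp only [Finset.mem_coe, Finset.mem_product, Finset.mem_powersetCard, Finset.mem_filter]
    refine ⟨⟨?_, ?_⟩, ⟨?_, ?_⟩, ?_⟩
    · intro y hy
      simp only [Finset.mem_image, Finset.mem_filter] at hy
      obtain ⟨c, ⟨hcS, hc0⟩, rfl⟩ := hy
      have := mem_diagram.1 (hsub hcS)
      rw [hc0] at this
      simpa using this.2
    · rw [Finset.card_image_of_injOn (injOn_snd0 S), hfib]
    · intro c hc
      simp only [Finset.mem_image, Finset.mem_filter] at hc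
      obtain ⟨d, ⟨hdS, hd0⟩, rfl⟩ := hc
      have hd := mem_diagram.1 (hsub hdS)
      simp only [List.length_cons] at hd
      rw [mem_diagram]
      obtain ⟨x, hx⟩ : ∃ x, d.1 = x + 1 := ⟨d.1 - 1, by omega⟩
      rw [hx] at hd
      simp only [hx, List.getD_cons_succ] at hd ⊢
      exact ⟨by omega, hd.2⟩
    · rw [Finset.card_image_of_injOn (injOn_down S)]
      have := Finset.card_filter_add_card_filter_not (s := S) (fun c => c.1 = 0)
      omega
    · intro x hx
      simp only [Finset.mem_range] at hx
      obtain ⟨c, hcS, hc1⟩ := hhits (x + 1) (by simp; omega)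
      refine ⟨(c.1 - 1, c.2), ?_, by simp [hc1]⟩
      simp only [Finset.mem_image, Finset.mem_filter]
      exact ⟨c, ⟨hcS, by omega⟩, rfl⟩
  · -- inverse maps into fiber
    rintro ⟨T, U⟩ hTU
    simp only [Finset.mem_coe, Finset.mem_product, Finset.mem_powersetCard, Finset.mem_filter] at hTU
    obtain ⟨⟨hTsub, hTcard⟩, ⟨hUsub, hUcard⟩, hUhits⟩ := hTU
    have hdisj : Disjoint (T.image fun y => ((0:ℕ), y)) (U.image fun c => (c.1 + 1, c.2)) := by
      rw [Finset.disjoint_left]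
      intro c hc hc'
      simp only [Finset.mem_image] at hc hc'
      obtain ⟨y, _, rfl⟩ := hc
      obtain ⟨d, _, hd⟩ := hc'
      simp only [Prod.mk.injEq] at hd
      omega
    have hcardim : (T.image fun y => ((0:ℕ), y)).card = j := by
      rw [Finset.card_image_of_injective _ inj_zeroPair, hTcard]
    simp only [Finset.mem_coe, hA, Finset.mem_filter, Finset.mem_powersetCard]
    refine ⟨⟨⟨?_, ?_⟩, ?_⟩, ?_⟩
    · intro c hc
      rw [Finset.mem_union] at hc
      rcases hc with hc | hc <;> simp only [Finset.mem_image] at hc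
      · obtain ⟨y, hy, rfl⟩ := hc
        rw [mem_diagram]
        have := Finset.mem_range.1 (hTsub hy)
        simp only [List.length_cons, List.getD_cons_zero]
        exact ⟨by omega, this⟩
      · obtain ⟨d, hd, rfl⟩ := hc
        have := mem_diagram.1 (hUsub hd)
        rw [mem_diagram]
        simp only [List.length_cons, List.getD_cons_succ]
        exact ⟨by omega, this.2⟩
    · rw [Finset.card_union_of_disjoint hdisj, hcardim,
        Finset.card_image_of_injective _ inj_up, hUcard]
      omega
    · intro x hx
      simp only [Finset.mem_range, List.length_cons] at hx
      rcases Nat.eq_zero_or_pos x with rfl | hxpos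
      · obtain ⟨y, hy⟩ := Finset.card_pos.1 (by omega : 0 < T.card)
        exact ⟨(0, y), Finset.mem_union_left _ (Finset.mem_image_of_mem _ hy), rfl⟩
      · obtain ⟨d, hd, hd1⟩ := hUhits (x - 1) (by simp; omega)
        refine ⟨(d.1 + 1, d.2), Finset.mem_union_right _ (Finset.mem_image_of_mem _ hd), ?_⟩
        simp only []
        omega
    · rw [filt0, hcardim]
  · -- left inverse
    intro S hS
    simp only [Finset.mem_coe, Finset.mem_filter, hA, Finset.mem_powersetCard] at hS
    obtain ⟨⟨⟨hsub, hcard⟩, hhits⟩, hfib⟩ := hS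
    dsimp only
    ext c
    simp only [Finset.mem_union, Finset.mem_image, Finset.mem_filter]
    constructor
    · rintro (⟨y, ⟨d, ⟨hdS, hd0⟩, rfl⟩, rfl⟩ | ⟨d', ⟨d, ⟨hdS, hd0⟩, rfl⟩, rfl⟩)
      · have : d = (0, d.2) := Prod.ext hd0 rfl
        rwa [← this]
      · have : (d.1 - 1 + 1, d.2) = d := Prod.ext (by omega) rfl
        rwa [this]
    · intro hcS
      rcases Nat.eq_zero_or_pos c.1 with hc0 | hcpos
      · exact Or.inl ⟨c.2, ⟨c, ⟨hcS, hc0⟩, rfl⟩, Prod.ext hc0.symm rfl⟩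
      · exact Or.inr ⟨(c.1 - 1, c.2), ⟨c, ⟨hcS, by omega⟩, rfl⟩, Prod.ext (by omega) rfl⟩
  · -- right inverse
    rintro ⟨T, U⟩ hTU
    dsimp only
    rw [filt0, filt1, Prod.mk.injEq]
    constructor
    · rw [Finset.image_image]
      ext y; simp
    · rw [Finset.image_image]
      ext c
      simp only [Finset.mem_image, Function.comp]
      constructor
      · rintro ⟨d, hd, rfl⟩
        simpa using hd
      · intro hc
        exact ⟨c, hc, by simp⟩
def G : List ℕ → ℕ → ℕ
  | [], r => if r = 0 then 1 else 0
  | a :: l, r => ∑ j ∈ Finset.Icc 1 r, a.choose j * G l (r - j)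
lemma gbc_eq_G (l : List ℕ) (r : ℕ) : gbc l r = G l r := by
  induction l generalizing r with
  | nil => rw [gbc_nil]; rfl
  | cons a l ih => rw [gbc_cons]; exact Finset.sum_congr rfl fun j _ => by rw [ih]
lemma G_swap (a b : ℕ) (l : List ℕ) (r : ℕ) : G (a :: b :: l) r = G (b :: a :: l) r := by
  simp only [G, Finset.mul_sum]
  rw [Finset.sum_sigma', Finset.sum_sigma']
  refine Finset.sum_nbij' (i := fun x => ⟨x.2, x.1⟩) (j := fun x => ⟨x.2, x.1⟩)
    ?_ ?_ ?_ ?_ ?_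
  · rintro ⟨j, k⟩ hx
    simp only [Finset.mem_sigma, Finset.mem_Icc] at hx ⊢
    omega
  · rintro ⟨j, k⟩ hx
    simp only [Finset.mem_sigma, Finset.mem_Icc] at hx ⊢
    omega
  · rintro ⟨j, k⟩ _; rfl
  · rintro ⟨j, k⟩ _; rfl
  · rintro ⟨j, k⟩ _
    have h : r - j - k = r - k - j := by omega
    dsimp only
    rw [h]; ring
lemma G_perm {l l' : List ℕ} (h : l.Perm l') (r : ℕ) : G l r = G l' r := by
  induction h generalizing r with
  | nil => rfl
  | cons x _ ih => simp only [G]; exact Finset.sum_congr rfl fun j _ => by rw [ih]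
  | swap x y l => exact G_swap y x l r
  | trans h1 h2 ih1 ih2 => rw [ih1, ih2]
def Gm (s : Multiset ℕ) (r : ℕ) : ℕ := G (s.sort (· ≥ ·)) r
lemma Gm_cons (a : ℕ) (s : Multiset ℕ) (r : ℕ) :
    Gm (a ::ₘ s) r = ∑ j ∈ Finset.Icc 1 r, a.choose j * Gm s (r - j) := by
  have hp : ((a ::ₘ s).sort (· ≥ ·)).Perm (a :: s.sort (· ≥ ·)) := by
    rw [← Multiset.coe_eq_coe, Multiset.sort_eq, ← Multiset.cons_coe, Multiset.sort_eq]
  rw [Gm, G_perm hp]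
  rfl
def zMs (s : Multiset ℕ) : ℕ :=
  ∏ i ∈ s.toFinset, i ^ s.count i * (s.count i).factorial
lemma zMs_pos {s : Multiset ℕ} (h : ∀ x ∈ s, 0 < x) : 0 < zMs s := by
  refine Finset.prod_pos fun i hi => ?_
  have := h i (Multiset.mem_toFinset.1 hi)
  positivity
lemma zMs_cons (a : ℕ) (s : Multiset ℕ) (ha : 0 < a) :
    zMs (a ::ₘ s) = a * (s.count a + 1) * zMs s := by
  classical
  have hterm : ∀ i ∈ s.toFinset.erase a,
      i ^ (a ::ₘ s).count i * ((a ::ₘ s).count i).factorial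
        = i ^ s.count i * (s.count i).factorial := by
    intro i hi
    rw [Multiset.count_cons_of_ne (Finset.ne_of_mem_erase hi)]
  have hz1 : zMs (a ::ₘ s)
      = (a ^ (s.count a + 1) * (s.count a + 1).factorial) *
        ∏ i ∈ s.toFinset.erase a, i ^ s.count i * (s.count i).factorial := by
    rw [zMs, Multiset.toFinset_cons,
      ← Finset.mul_prod_erase _ _ (Finset.mem_insert_self a s.toFinset),
      Finset.erase_insert_eq_erase, Multiset.count_cons_self]
    rw [Finset.prod_congr rfl hterm]
  have hz2 : zMs s
      = (a ^ s.count a * (s.count a).factorial) *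
        ∏ i ∈ s.toFinset.erase a, i ^ s.count i * (s.count i).factorial := by
    by_cases hmem : a ∈ s.toFinset
    · rw [zMs, ← Finset.mul_prod_erase _ _ hmem]
    · rw [zMs, Finset.erase_eq_of_notMem hmem,
        Multiset.count_eq_zero_of_notMem (by simpa using hmem)]
      simp
  rw [hz1, hz2, pow_succ, Nat.factorial_succ]
  ring
lemma sumR (n p i : ℕ) (hi : 1 ≤ i) (hin : i ≤ n) (hp : 1 ≤ p) (f : Multiset ℕ → ℚ) :
    ∑ μ ∈ Finset.univ.filter (fun μ : n.Partition => μ.parts.card = p),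
        f μ.parts / zMs μ.parts * (μ.parts.count i : ℚ)
      = (i : ℚ)⁻¹ * ∑ ν ∈ Finset.univ.filter
            (fun ν : (n - i).Partition => ν.parts.card = p - 1),
          f (i ::ₘ ν.parts) / zMs ν.parts := by
  classical
  rw [Finset.mul_sum]
  rw [← Finset.sum_subset (s₁ := Finset.univ.filter
      (fun μ : n.Partition => μ.parts.card = p ∧ i ∈ μ.parts))
      (by intro μ hμ
          simp only [Finset.mem_filter] at hμ ⊢
          exact ⟨hμ.1, hμ.2.1⟩)
      (by intro μ hμ h2
          simp only [Finset.mem_filter, Finset.mem_univ, true_and] at hμ h2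
          rw [Multiset.count_eq_zero_of_notMem (fun hmem => h2 ⟨hμ, hmem⟩)]
          simp)]
  refine Finset.sum_bij'
    (i := fun μ hμ => (⟨μ.parts.erase i,
      fun hj => μ.parts_pos (Multiset.mem_of_mem_erase hj), ?_⟩ : (n - i).Partition))
    (j := fun ν hν => (⟨i ::ₘ ν.parts, ?_, ?_⟩ : n.Partition))
    ?_ ?_ ?_ ?_ ?_
  · -- sum of erase
    simp only [Finset.mem_filter, Finset.mem_univ, true_and] at hμ
    have := Multiset.cons_erase hμ.2
    have hs : (i ::ₘ μ.parts.erase i).sum = n := by rw [this, μ.parts_sum]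
    rw [Multiset.sum_cons] at hs
    omega
  · -- positivity of cons
    intro j hj
    rcases Multiset.mem_cons.1 hj with rfl | hj'
    · omega
    · exact ν.parts_pos hj'
  · -- sum of cons
    rw [Multiset.sum_cons, ν.parts_sum]
    omega
  · -- maps into target filter
    intro μ hμ
    simp only [Finset.mem_filter, Finset.mem_univ, true_and] at hμ ⊢
    rw [Multiset.card_erase_of_mem hμ.2, hμ.1]
    rfl
  · -- inverse maps into source filter
    intro ν hν
    simp only [Finset.mem_filter, Finset.mem_univ, true_and] at hν ⊢
    constructor
    · rw [Multiset.card_cons, hν]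
      omega
    · exact Multiset.mem_cons_self i _
  · -- left inverse
    intro μ hμ
    simp only [Finset.mem_filter, Finset.mem_univ, true_and] at hμ
    exact Nat.Partition.ext (Multiset.cons_erase hμ.2)
  · -- right inverse
    intro ν hν
    exact Nat.Partition.ext (Multiset.erase_cons_head i ν.parts)
  · -- terms agree
    intro μ hμ
    simp only [Finset.mem_filter, Finset.mem_univ, true_and] at hμ
    have hrw : μ.parts = i ::ₘ μ.parts.erase i := (Multiset.cons_erase hμ.2).symm
    have hz : zMs μ.parts = i * ((μ.parts.erase i).count i + 1) * zMs (μ.parts.erase i) := by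
      conv_lhs => rw [hrw]
      rw [zMs_cons i _ hi]
    have hcount : μ.parts.count i = (μ.parts.erase i).count i + 1 := by
      conv_lhs => rw [hrw]
      rw [Multiset.count_cons_self]
    have hzpos : 0 < zMs (μ.parts.erase i) :=
      zMs_pos fun x hx => μ.parts_pos (Multiset.mem_of_mem_erase hx)
    rw [hcount, hz]
    conv_lhs => rw [hrw]
    have hzq : (zMs (μ.parts.erase i) : ℚ) ≠ 0 := by positivity
    have hiq : (i : ℚ) ≠ 0 := by positivity
    set c := (μ.parts.erase i).count i
    push_cast
    rw [Multiset.erase_cons_head]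
    field_simp
lemma vand (j : ℕ) : ∀ N k, (∑ i ∈ Finset.Icc j N, i.choose j * (N - i).choose k)
    = (N + 1).choose (j + k + 1) := by
  intro N
  induction N with
  | zero =>
    intro k
    rcases Nat.eq_zero_or_pos j with rfl | hj
    · cases k with
      | zero => simp
      | succ n =>
        simp only [Finset.Icc_self, Finset.sum_singleton, Nat.choose_self,
          Nat.sub_self, Nat.choose_zero_succ, Nat.mul_zero, Nat.zero_add]
        rw [eq_comm, Nat.choose_eq_zero_of_lt (by omega)]
    · rw [Finset.Icc_eq_empty (by omega), Finset.sum_empty, eq_comm,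
        Nat.choose_eq_zero_of_lt (by omega)]
  | succ N ih =>
    intro k
    rcases le_or_gt j (N + 1) with hj | hj
    · rw [Finset.sum_Icc_succ_top hj]
      have hstep : ∀ i ∈ Finset.Icc j N, i.choose j * (N + 1 - i).choose k
          = i.choose j * ((N - i) + 1).choose k := by
        intro i hi
        rw [Finset.mem_Icc] at hi
        congr 2
        omega
      rw [Finset.sum_congr rfl hstep]
      cases k with
      | zero =>
        simp only [Nat.choose_zero_right, Nat.mul_one, Nat.sub_self]
        rw [← Nat.sum_Icc_choose, Finset.sum_Icc_succ_top hj, Nat.sum_Icc_choose]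
      | succ k' =>
        have hsplit : ∀ i ∈ Finset.Icc j N, i.choose j * ((N - i) + 1).choose (k' + 1)
            = i.choose j * (N - i).choose k' + i.choose j * (N - i).choose (k' + 1) := by
          intro i _
          rw [Nat.choose_succ_succ]
          ring
        rw [Finset.sum_congr rfl hsplit, Finset.sum_add_distrib, ih k', ih (k' + 1),
          Nat.sub_self, Nat.choose_zero_succ, Nat.mul_zero, Nat.add_zero,
          show j + (k' + 1) + 1 = (j + k' + 1) + 1 by ring,
          show N + 1 + 1 = (N + 1) + 1 by rfl, Nat.choose_succ_succ (N + 1) (j + k' + 1)]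
    · rw [Finset.Icc_eq_empty (by omega), Finset.sum_empty, eq_comm,
        Nat.choose_eq_zero_of_lt (by omega)]
lemma binC_coe (a b : ℕ) : binC (a : ℤ) (b : ℤ) = (a.choose b : ℚ) := by
  rw [binC, if_neg (by omega), bin]
  by_cases h : b ≤ a
  · rw [if_pos ⟨by positivity, by exact_mod_cast h⟩]
    simp
  · rw [if_neg (by omega), eq_comm, Nat.cast_eq_zero, Nat.choose_eq_zero_of_lt (by omega)]
lemma binC_zero_of_neg {a b : ℤ} (hb : b < 0) (h : ¬(a = -1 ∧ b = -1)) : binC a b = 0 := by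
  rw [binC, if_neg h, bin, if_neg (by omega)]
lemma binC_zero_of_lt {a b : ℤ} (ha : 0 ≤ b) (h : a < b) : binC a b = 0 := by
  rw [binC, if_neg (by omega), bin, if_neg (by omega)]

/-- Claim D -/
lemma claimD (m s j : ℕ) (hm : 1 ≤ m) (hj1 : 1 ≤ j) (hjs : j ≤ s) :
    ∑ i ∈ Finset.Icc 1 m, (i.choose j : ℚ) * binC ((m:ℤ) - i - 1) ((s:ℤ) - j - 1)
      = (m.choose s : ℚ) := by
  obtain ⟨m', rfl⟩ : ∃ m', m = m' + 1 := ⟨m - 1, by omega⟩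
  rcases eq_or_lt_of_le hjs with rfl | hlt
  · -- j = s
    have h0 : ∀ i ∈ Finset.Icc 1 (m' + 1), i ≠ m' + 1 →
        (i.choose j : ℚ) * binC ((m' + 1 : ℕ) - i - 1) ((j:ℤ) - j - 1) = 0 := by
      intro i hi hne
      rw [Finset.mem_Icc] at hi
      rw [binC_zero_of_neg (by omega) (by push_cast; omega), mul_zero]
    have h1 : (m' + 1) ∉ Finset.Icc 1 (m' + 1) →
        ((m' + 1).choose j : ℚ) * binC ((m' + 1 : ℕ) - (m' + 1 : ℕ) - 1) ((j:ℤ) - j - 1) = 0 := by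
      intro h
      simp at h
    rw [Finset.sum_eq_single (m' + 1) h0 h1]
    have e1 : ((m' + 1 : ℕ) : ℤ) - (m' + 1 : ℕ) - 1 = -1 := by push_cast; ring
    have e2 : (j : ℤ) - j - 1 = -1 := by ring
    rw [e1, e2]
    unfold binC
    rw [if_pos ⟨rfl, rfl⟩, mul_one]
  · -- j < s
    rw [Finset.sum_Icc_succ_top (by omega)]
    have htop : (((m' + 1).choose j : ℕ) : ℚ) *
        binC ((m' + 1 : ℕ) - ((m' + 1 : ℕ) : ℤ) - 1) ((s:ℤ) - j - 1) = 0 := by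
      rw [binC_zero_of_lt (by push_cast; omega) (by push_cast; omega), mul_zero]
    rw [htop, add_zero]
    have hterm : ∀ i ∈ Finset.Icc 1 m', (i.choose j : ℚ) *
        binC ((m' + 1 : ℕ) - i - 1) ((s:ℤ) - j - 1)
        = ((i.choose j * (m' - i).choose (s - j - 1) : ℕ) : ℚ) := by
      intro i hi
      rw [Finset.mem_Icc] at hi
      have h1 : ((m' + 1 : ℕ) : ℤ) - i - 1 = ((m' - i : ℕ) : ℤ) := by omega
      have h2 : (s : ℤ) - j - 1 = ((s - j - 1 : ℕ) : ℤ) := by omega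
      rw [h1, h2, binC_coe]
      push_cast
      ring
    rw [Finset.sum_congr rfl hterm, ← Nat.cast_sum]
    have hnat : ∑ i ∈ Finset.Icc 1 m', i.choose j * (m' - i).choose (s - j - 1)
        = (m' + 1).choose s := by
      rw [← Finset.sum_subset (Finset.Icc_subset_Icc_left hj1)
        (fun i hi hni => by
          rw [Finset.mem_Icc] at hi
          rw [Finset.mem_Icc] at hni
          rw [Nat.choose_eq_zero_of_lt (by omega), Nat.zero_mul])]
      rw [vand j m' (s - j - 1)]
      congr 1
      omega
    rw [hnat]
lemma stirF (q' : ℕ) : ∀ s, stir s (q' + 1)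
    = ∑ j ∈ Finset.range s, (s - 1).descFactorial j * stir (s - 1 - j) q' := by
  intro s
  induction s with
  | zero => rfl
  | succ s ih =>
    rw [show stir (s + 1) (q' + 1) = s * stir s (q' + 1) + stir s q' from rfl,
      Finset.sum_range_succ']
    have h0 : (s + 1 - 1).descFactorial 0 * stir (s + 1 - 1 - 0) q' = stir s q' := by
      simp
    rw [h0]
    congr 1
    cases s with
    | zero => simp
    | succ s' =>
      rw [ih, Finset.mul_sum]
      refine Finset.sum_congr rfl fun j _ => ?_
      simp only [Nat.add_sub_cancel, show s' + 1 - (j + 1) = s' - j by omega,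
        show (1:ℕ) + s' = s' + 1 by omega, show (1:ℕ) + j = j + 1 by omega,
        Nat.succ_descFactorial_succ]
      ring

/-- in ℚ: `stir s q / (s-1)! = ∑_{j=1}^{s} stir (s-j) (q-1) / (s-j)!` -/
lemma stirFQ (q' s : ℕ) (hs : 1 ≤ s) :
    (stir s (q' + 1) : ℚ) / (s - 1).factorial
      = ∑ j ∈ Finset.Icc 1 s, (stir (s - j) q' : ℚ) / (s - j).factorial := by
  have hconv : ∑ j ∈ Finset.Icc 1 s, (stir (s - j) q' : ℚ) / (s - j).factorial
      = ∑ j ∈ Finset.range s, (stir (s - 1 - j) q' : ℚ) / (s - 1 - j).factorial := by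
    refine Finset.sum_nbij' (i := fun j => j - 1) (j := fun j => j + 1) ?_ ?_ ?_ ?_ ?_
    · intro j hj; simp only [Finset.mem_Icc, Finset.mem_range] at *; omega
    · intro j hj; simp only [Finset.mem_Icc, Finset.mem_range] at *; omega
    · intro j hj; simp only [Finset.mem_Icc] at hj; omega
    · intro j hj; simp only [Finset.mem_range] at hj; omega
    · intro j hj
      simp only [Finset.mem_Icc] at hj
      have e : s - 1 - (j - 1) = s - j := by omega
      rw [e]
  rw [hconv, stirF q' s]
  push_cast
  rw [Finset.sum_div]
  refine Finset.sum_congr rfl fun j hj => ?_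
  rw [Finset.mem_range] at hj
  have hfac : ((s - 1).descFactorial j : ℚ) = (s - 1).factorial / (s - 1 - j).factorial := by
    have h := Nat.factorial_mul_descFactorial (show j ≤ s - 1 by omega)
    have hne : ((s - 1 - j).factorial : ℚ) ≠ 0 := by positivity
    rw [eq_div_iff hne]
    have h2 : (s - 1).descFactorial j * (s - 1 - j).factorial = (s - 1).factorial := by
      rw [mul_comm]; exact h
    exact_mod_cast h2
  rw [hfac]
  have hne2 : ((s - 1 - j).factorial : ℚ) ≠ 0 := by positivity
  field_simp
lemma lemC (m q' s : ℕ) (hm : 1 ≤ m) :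
    ∑ i ∈ Finset.Icc 1 m, ∑ j ∈ Finset.Icc 1 s,
        (i.choose j : ℚ) * ((stir (s - j) q' : ℚ) / (s - j).factorial
          * binC ((m:ℤ) - i - 1) ((s:ℤ) - j - 1))
      = m * ((stir s (q' + 1) : ℚ) / s.factorial * binC ((m:ℤ) - 1) ((s:ℤ) - 1)) := by
  rcases Nat.eq_zero_or_pos s with rfl | hs
  · rw [binC_zero_of_neg (by omega) (by omega),
      Finset.sum_eq_zero (fun i _ => by rw [Finset.Icc_eq_empty (by omega), Finset.sum_empty])]
    ring
  · rw [Finset.sum_comm]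
    have hinner : ∀ j ∈ Finset.Icc 1 s, ∑ i ∈ Finset.Icc 1 m,
        (i.choose j : ℚ) * ((stir (s - j) q' : ℚ) / (s - j).factorial
          * binC ((m:ℤ) - i - 1) ((s:ℤ) - j - 1))
        = ((stir (s - j) q' : ℚ) / (s - j).factorial) * (m.choose s : ℚ) := by
      intro j hj
      rw [Finset.mem_Icc] at hj
      have hre : ∀ i ∈ Finset.Icc 1 m,
          (i.choose j : ℚ) * ((stir (s - j) q' : ℚ) / (s - j).factorial
            * binC ((m:ℤ) - i - 1) ((s:ℤ) - j - 1))
          = ((stir (s - j) q' : ℚ) / (s - j).factorial) *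
            ((i.choose j : ℚ) * binC ((m:ℤ) - i - 1) ((s:ℤ) - j - 1)) := by
        intro i _; ring
      rw [Finset.sum_congr rfl hre, ← Finset.mul_sum, claimD m s j hm hj.1 hj.2]
    rw [Finset.sum_congr rfl hinner, ← Finset.sum_mul, ← stirFQ q' s hs]
    have hbin : binC ((m:ℤ) - 1) ((s:ℤ) - 1) = (((m-1).choose (s-1) : ℕ) : ℚ) := by
      rw [show (m:ℤ) - 1 = ((m - 1 : ℕ) : ℤ) by omega,
        show (s:ℤ) - 1 = ((s - 1 : ℕ) : ℤ) by omega, binC_coe]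
    rw [hbin]
    have hnat : m * ((m-1).choose (s-1)) = (m.choose s) * s := by
      have h := Nat.add_one_mul_choose_eq (m-1) (s-1)
      rwa [show m - 1 + 1 = m by omega,
        show s - 1 + 1 = s by omega] at h
    have hfacs : (s.factorial : ℚ) = s * (s-1).factorial := by
      rw [← Nat.mul_factorial_pred (by omega)]
      push_cast
      ring
    have h1 : ((s-1).factorial : ℚ) ≠ 0 := by positivity
    have h2 : (s.factorial : ℚ) ≠ 0 := by positivity
    have hQ : (m : ℚ) * ((m-1).choose (s-1)) = (m.choose s) * s := by exact_mod_cast hnat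
    field_simp
    rw [hfacs]
    linear_combination (-((stir s (q' + 1) : ℚ) * ((s-1).factorial : ℚ))) * hQ
lemma sumExpand (i m q s : ℕ) :
    ∑ ν ∈ Finset.univ.filter (fun ν : m.Partition => ν.parts.card = q),
        (Gm (i ::ₘ ν.parts) s : ℚ) / zMs ν.parts
      = ∑ j ∈ Finset.Icc 1 s, (i.choose j : ℚ) *
          ∑ ν ∈ Finset.univ.filter (fun ν : m.Partition => ν.parts.card = q),
            (Gm ν.parts (s - j) : ℚ) / zMs ν.parts := by
  have hper : ∀ ν ∈ Finset.univ.filter (fun ν : m.Partition => ν.parts.card = q),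
      (Gm (i ::ₘ ν.parts) s : ℚ) / zMs ν.parts
      = ∑ j ∈ Finset.Icc 1 s, (i.choose j : ℚ) * ((Gm ν.parts (s - j) : ℚ) / zMs ν.parts) := by
    intro ν _
    rw [Gm_cons]
    push_cast
    rw [Finset.sum_div]
    refine Finset.sum_congr rfl fun j _ => ?_
    ring
  rw [Finset.sum_congr rfl hper, Finset.sum_comm]
  refine Finset.sum_congr rfl fun j _ => ?_
  rw [Finset.mul_sum]
lemma stir_zero_succ (k : ℕ) : stir (k + 1) 0 = 0 := rfl
lemma stir_succ_zero (k : ℕ) : stir 0 (k + 1) = 0 := rfl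
lemma lemB : ∀ m q s : ℕ,
    ∑ ν ∈ Finset.univ.filter (fun ν : m.Partition => ν.parts.card = q),
        (Gm ν.parts s : ℚ) / zMs ν.parts
      = (stir s q : ℚ) / s.factorial * binC ((m:ℤ) - 1) ((s:ℤ) - 1) := by
  intro m
  induction m using Nat.strong_induction_on with
  | _ m IH =>
  intro q s
  rcases Nat.eq_zero_or_pos m with rfl | hm
  · -- m = 0
    have hpart : ∀ ν : Nat.Partition 0, ν.parts = 0 := by
      intro ν
      by_contra h
      obtain ⟨x, hx⟩ := Multiset.exists_mem_of_ne_zero h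
      have h1 := ν.parts_pos hx
      have h2 := ν.parts_sum
      have h3 := Multiset.single_le_sum (fun y (_ : y ∈ ν.parts) => Nat.zero_le y) x hx
      omega
    rcases Nat.eq_zero_or_pos q with rfl | hq
    · have huniv : Finset.univ.filter (fun ν : Nat.Partition 0 => ν.parts.card = 0)
          = {(default : Nat.Partition 0)} := by
        apply Finset.eq_singleton_iff_unique_mem.2
        constructor
        · simp [hpart]
        · intro ν _; exact Subsingleton.elim _ _
      rw [huniv, Finset.sum_singleton, hpart default]
      have hGm : Gm 0 s = if s = 0 then 1 else 0 := by
        rw [Gm]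
        have he : (Multiset.sort (0 : Multiset ℕ) (· ≥ ·)) = ([] : List ℕ) := by simp
        rw [he]
        rfl
      have hz : zMs 0 = 1 := by rfl
      rw [hGm, hz]
      rcases Nat.eq_zero_or_pos s with rfl | hs
      · have e : ((0:ℕ):ℤ) - 1 = -1 := by norm_num
        rw [e, binC, if_pos (show (-1:ℤ) = -1 ∧ (-1:ℤ) = -1 from ⟨rfl, rfl⟩)]
        norm_num
        rfl
      · rw [if_neg (by omega)]
        obtain ⟨s', rfl⟩ : ∃ s', s = s' + 1 := ⟨s - 1, by omega⟩
        rw [stir_zero_succ]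
        norm_num
    · have hempty : Finset.univ.filter (fun ν : Nat.Partition 0 => ν.parts.card = q)
          = ∅ := by
        apply Finset.filter_false_of_mem
        intro ν _
        rw [hpart ν]
        simp only [Multiset.card_zero]
        omega
      rw [hempty, Finset.sum_empty]
      rcases Nat.eq_zero_or_pos s with rfl | hs
      · obtain ⟨q', rfl⟩ : ∃ q', q = q' + 1 := ⟨q - 1, by omega⟩
        rw [stir_succ_zero]
        norm_num
      · rw [binC_zero_of_lt (by omega) (by omega), mul_zero]
  · rcases Nat.eq_zero_or_pos q with rfl | hq
    · -- q = 0, m ≥ 1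
      have hempty : Finset.univ.filter (fun ν : m.Partition => ν.parts.card = 0)
          = ∅ := by
        apply Finset.filter_false_of_mem
        intro ν _
        intro hc
        have h2 := ν.parts_sum
        rw [Multiset.card_eq_zero.1 hc] at h2
        simp only [Multiset.sum_zero] at h2
        omega
      rw [hempty, Finset.sum_empty]
      rcases Nat.eq_zero_or_pos s with rfl | hs
      · rw [binC_zero_of_neg (by omega) (by omega), mul_zero]
      · obtain ⟨s', rfl⟩ : ∃ s', s = s' + 1 := ⟨s - 1, by omega⟩
        rw [stir_zero_succ]
        norm_num
    · -- main case : m ≥ 1, q ≥ 1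
      obtain ⟨q', rfl⟩ : ∃ q', q = q' + 1 := ⟨q - 1, by omega⟩
      have hmQ : (m : ℚ) ≠ 0 := by positivity
      refine mul_left_cancel₀ hmQ ?_
      have hcount : ∀ μ : m.Partition,
          (m:ℚ) = ∑ i ∈ Finset.Icc 1 m, (μ.parts.count i : ℚ) * i := by
        intro μ
        have hsub : μ.parts.toFinset ⊆ Finset.Icc 1 m := by
          intro x hx
          rw [Multiset.mem_toFinset] at hx
          have h1 := μ.parts_pos hx
          have h2 := Multiset.single_le_sum (fun y (_ : y ∈ μ.parts) => Nat.zero_le y) x hx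
          rw [μ.parts_sum] at h2
          exact Finset.mem_Icc.2 ⟨h1, h2⟩
        have hnat : ∑ i ∈ Finset.Icc 1 m, μ.parts.count i * i = m := by
          rw [← Finset.sum_subset hsub (fun x _ hx => by
            rw [Multiset.count_eq_zero_of_notMem (by simpa using hx), Nat.zero_mul])]
          have hmap := Finset.sum_multiset_map_count μ.parts (id : ℕ → ℕ)
          rw [Multiset.map_id] at hmap
          conv_rhs => rw [← μ.parts_sum, hmap]
          exact Finset.sum_congr rfl fun i _ => by rw [smul_eq_mul]; rfl
        calc (m:ℚ) = ((∑ i ∈ Finset.Icc 1 m, μ.parts.count i * i : ℕ) : ℚ) := by rw [hnat]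
          _ = ∑ i ∈ Finset.Icc 1 m, (μ.parts.count i : ℚ) * i := by push_cast; rfl
      have step1 : (m:ℚ) * (∑ ν ∈ Finset.univ.filter
            (fun ν : m.Partition => ν.parts.card = q' + 1),
          (Gm ν.parts s : ℚ) / zMs ν.parts)
          = ∑ i ∈ Finset.Icc 1 m, (i:ℚ) *
            (∑ μ ∈ Finset.univ.filter (fun μ : m.Partition => μ.parts.card = q' + 1),
              (Gm μ.parts s : ℚ) / zMs μ.parts * (μ.parts.count i : ℚ)) := by
        rw [Finset.mul_sum]
        have hper : ∀ μ ∈ Finset.univ.filter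
            (fun μ : m.Partition => μ.parts.card = q' + 1),
            (m:ℚ) * ((Gm μ.parts s : ℚ) / zMs μ.parts)
            = ∑ i ∈ Finset.Icc 1 m, (i:ℚ) *
              ((Gm μ.parts s : ℚ) / zMs μ.parts * (μ.parts.count i : ℚ)) := by
          intro μ _
          calc (m:ℚ) * ((Gm μ.parts s : ℚ) / zMs μ.parts)
              = ((Gm μ.parts s : ℚ) / zMs μ.parts) * (m:ℚ) := by ring
            _ = ((Gm μ.parts s : ℚ) / zMs μ.parts) *
                ∑ i ∈ Finset.Icc 1 m, (μ.parts.count i : ℚ) * i := by rw [← hcount μ]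
            _ = ∑ i ∈ Finset.Icc 1 m, (i:ℚ) *
                ((Gm μ.parts s : ℚ) / zMs μ.parts * (μ.parts.count i : ℚ)) := by
              rw [Finset.mul_sum]
              exact Finset.sum_congr rfl fun i _ => by ring
        rw [Finset.sum_congr rfl hper, Finset.sum_comm]
        refine Finset.sum_congr rfl fun i _ => ?_
        rw [Finset.mul_sum]
      rw [step1]
      have step2 : ∀ i ∈ Finset.Icc 1 m,
          (i:ℚ) * (∑ μ ∈ Finset.univ.filter
              (fun μ : m.Partition => μ.parts.card = q' + 1),
            (Gm μ.parts s : ℚ) / zMs μ.parts * (μ.parts.count i : ℚ))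
          = ∑ j ∈ Finset.Icc 1 s, (i.choose j : ℚ) *
              ((stir (s - j) q' : ℚ) / (s - j).factorial
                * binC ((m:ℤ) - i - 1) ((s:ℤ) - j - 1)) := by
        intro i hi
        rw [Finset.mem_Icc] at hi
        have hiQ : (i:ℚ) ≠ 0 := by
          have : 0 < i := hi.1
          positivity
        rw [sumR m (q' + 1) i hi.1 hi.2 (by omega) (fun t => (Gm t s : ℚ)),
          ← mul_assoc, mul_inv_cancel₀ hiQ, one_mul]
        rw [show q' + 1 - 1 = q' from rfl]
        rw [sumExpand i (m - i) q' s]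
        refine Finset.sum_congr rfl fun j hj => ?_
        rw [Finset.mem_Icc] at hj
        rw [IH (m - i) (by omega) q' (s - j),
          show ((m - i : ℕ) : ℤ) - 1 = (m:ℤ) - i - 1 by omega,
          show ((s - j : ℕ) : ℤ) - 1 = (s:ℤ) - j - 1 by omega]
      rw [Finset.sum_congr rfl step2, lemC m q' s hm]

theorem stmt18 (n r p i : ℕ) (hn : 1 ≤ n) (hr : 1 ≤ r) (hp1 : 1 ≤ p) (hi : 1 ≤ i)
    (hpr : p ≤ r) :
    ∑ μ ∈ Finset.univ.filter (fun μ : n.Partition => μ.parts.card = p),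
        (gbcP μ r : ℚ) / zMu μ * (μ.parts.count i : ℚ)
      = ∑ j ∈ Finset.Icc 1 i,
          (stir (r - j) (p - 1) : ℚ) / (i * (r - j).factorial) * (i.choose j : ℚ)
            * binC ((n : ℤ) - i - 1) ((r : ℤ) - j - 1) := by
  have hiQ : (i : ℚ) ≠ 0 := by positivity
  have hgz : ∀ μ : n.Partition, (gbcP μ r : ℚ) / zMu μ * (μ.parts.count i : ℚ)
      = (Gm μ.parts r : ℚ) / zMs μ.parts * (μ.parts.count i : ℚ) := by
    intro μ
    have h1 : gbcP μ r = Gm μ.parts r := gbc_eq_G _ r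
    have h2 : zMu μ = zMs μ.parts := rfl
    rw [h1, h2]
  rw [Finset.sum_congr rfl (fun μ _ => hgz μ)]
  by_cases hin : i ≤ n
  · -- main case
    rw [sumR n p i hi hin hp1 (fun t => (Gm t r : ℚ)), sumExpand i (n - i) (p - 1) r]
    have hB : ∀ j ∈ Finset.Icc 1 r, (i.choose j : ℚ) *
        (∑ ν ∈ Finset.univ.filter (fun ν : (n-i).Partition => ν.parts.card = p - 1),
          (Gm ν.parts (r - j) : ℚ) / zMs ν.parts)
        = (i.choose j : ℚ) * ((stir (r - j) (p - 1) : ℚ) / (r - j).factorial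
            * binC ((n:ℤ) - i - 1) ((r:ℤ) - j - 1)) := by
      intro j hj
      rw [Finset.mem_Icc] at hj
      rw [lemB (n - i) (p - 1) (r - j),
        show ((n - i : ℕ) : ℤ) - 1 = (n:ℤ) - i - 1 by omega,
        show ((r - j : ℕ) : ℤ) - 1 = (r:ℤ) - j - 1 by omega]
    rw [Finset.sum_congr rfl hB]
    have e1 : ∑ j ∈ Finset.Icc 1 r, (i.choose j : ℚ) *
          ((stir (r - j) (p - 1) : ℚ) / (r - j).factorial
            * binC ((n:ℤ) - i - 1) ((r:ℤ) - j - 1))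
        = ∑ j ∈ Finset.Icc 1 (i + r), (i.choose j : ℚ) *
          ((stir (r - j) (p - 1) : ℚ) / (r - j).factorial
            * binC ((n:ℤ) - i - 1) ((r:ℤ) - j - 1)) := by
      refine Finset.sum_subset (Finset.Icc_subset_Icc_right (by omega)) ?_
      intro j hj hnj
      rw [Finset.mem_Icc] at hj
      rw [Finset.mem_Icc] at hnj
      rw [binC_zero_of_neg (by omega) (by omega), mul_zero, mul_zero]
    have e2 : ∑ j ∈ Finset.Icc 1 i,
          (stir (r - j) (p - 1) : ℚ) / (i * (r - j).factorial) * (i.choose j : ℚ)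
            * binC ((n : ℤ) - i - 1) ((r : ℤ) - j - 1)
        = ∑ j ∈ Finset.Icc 1 (i + r),
          (stir (r - j) (p - 1) : ℚ) / (i * (r - j).factorial) * (i.choose j : ℚ)
            * binC ((n : ℤ) - i - 1) ((r : ℤ) - j - 1) := by
      refine Finset.sum_subset (Finset.Icc_subset_Icc_right (by omega)) ?_
      intro j hj hnj
      rw [Finset.mem_Icc] at hj
      rw [Finset.mem_Icc] at hnj
      rw [Nat.choose_eq_zero_of_lt (by omega)]
      push_cast
      ring
    rw [e1, e2, Finset.mul_sum]
    refine Finset.sum_congr rfl fun j hj => ?_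
    have hfQ : ((r - j).factorial : ℚ) ≠ 0 := by positivity
    field_simp
  · -- i > n : both sides vanish
    rw [Finset.sum_eq_zero, Finset.sum_eq_zero]
    · intro j hj
      rw [Finset.mem_Icc] at hj
      rcases le_or_gt 0 ((r:ℤ) - j - 1) with hb | hb
      · rw [binC_zero_of_lt hb (by omega), mul_zero]
      · rw [binC_zero_of_neg hb (by omega), mul_zero]
    · intro μ hμ
      have hno : i ∉ μ.parts := by
        intro hmem
        have h2 := Multiset.single_le_sum (fun y (_ : y ∈ μ.parts) => Nat.zero_le y) i hmem
        rw [μ.parts_sum] at h2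
        omega
      rw [Multiset.count_eq_zero_of_notMem hno]
      simp
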